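/- If a rooted tree T contains a subset order-isomorphic to the full binary tree 2^{<ω}, then the ray space R(T) contains a topological copy of the Cantor space 2^ω. In particular, the map sending f ∈ 2^ω to the ray generated by the images of its initial segments is a topological embedding of 2^ω into R(T). -/

import Mathlib

open Set Topology

/-- An order-theoretic tree: every set of predecessors is a well-ordered chain. -/
def IsOrderTree (T : Type*) [PartialOrder T] : Prop :=
  ∀ t : T, (Set.Iio t).IsWF ∧ IsChain (· ≤ ·) (Set.Iio t)

/-- A ray: a nonempty, downward closed chain with no maximal element. -/
def IsRay {T : Type*} [PartialOrder T] (R : Set T) : Prop :=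
  R.Nonempty ∧ IsChain (· ≤ ·) R ∧ (∀ x ∈ R, ∀ y, y ≤ x → y ∈ R) ∧
    ∀ x ∈ R, ∃ y ∈ R, x < y

/-- The ray space of a tree. -/
def RaySpace (T : Type*) [PartialOrder T] := {R : Set T // IsRay R}

/-- The topology on the ray space, inherited from the product topology on `2^T`:
subbasic open sets are `[t] = {R : t ∈ R}` and their complements. -/
instance {T : Type*} [PartialOrder T] : TopologicalSpace (RaySpace T) :=
  TopologicalSpace.generateFrom
    {U | ∃ t : T, U = {R : RaySpace T | t ∈ R.val} ∨ U = {R : RaySpace T | t ∉ R.val}}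

/-!
Since `φ` reflects the prefix order, the points `φ (f ↾ n)` increase strictly, and in a tree
everything below them is a chain: this is the ray `ψ f`. As `φ (f ↾ (n + 1)) ∈ ψ g` forces
`g n = f n`, `ψ` is injective. Whether `t ∈ ψ f` depends only on a finite initial segment
of `f`: once some `φ (f ↾ n)` is not below `t`, it is decided by `t ≤ φ (f ↾ n)`, and if the
whole sequence stays below `t`, then `t` lies on no `ψ g` at all. So `ψ` is continuous, and a
continuous injection of the compact Cantor space into the Hausdorff ray space is an embedding.
-/

namespace RaySpace

variable {T : Type*} [PartialOrder T]

theorem isOpen_setOf_mem (t : T) : IsOpen {X : RaySpace T | t ∈ X.val} :=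
  TopologicalSpace.isOpen_generateFrom_of_mem ⟨t, Or.inl rfl⟩

theorem isOpen_setOf_notMem (t : T) : IsOpen {X : RaySpace T | t ∉ X.val} :=
  TopologicalSpace.isOpen_generateFrom_of_mem ⟨t, Or.inr rfl⟩

instance : T2Space (RaySpace T) where
  t2 X Y hXY := by
    obtain ⟨t, ht⟩ : ∃ t, ¬(t ∈ X.val ↔ t ∈ Y.val) := by
      by_contra! h
      exact hXY (Subtype.ext (Set.ext h))
    have hdisj : Disjoint {X : RaySpace T | t ∈ X.val} {X | t ∉ X.val} :=
      Set.disjoint_left.2 fun _ h₁ h₂ => h₂ h₁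
    by_cases htX : t ∈ X.val
    · exact ⟨_, _, isOpen_setOf_mem t, isOpen_setOf_notMem t, htX, by tauto, hdisj⟩
    · exact ⟨_, _, isOpen_setOf_notMem t, isOpen_setOf_mem t, htX, by tauto, hdisj.symm⟩

end RaySpace

theorem IsOrderTree.le_total_of_le {T : Type*} [PartialOrder T] (htree : IsOrderTree T)
    {x y z : T} (hx : x ≤ z) (hy : y ≤ z) : x ≤ y ∨ y ≤ x := by
  rcases hx.lt_or_eq with hx | rfl
  · rcases hy.lt_or_eq with hy | rfl
    · rcases eq_or_ne x y with rfl | hxy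
      · exact Or.inl le_rfl
      · exact (htree z).2 hx hy hxy
    · exact Or.inl hx.le
  · exact Or.inr hy

theorem IsRay.mem_iff_le_of_not_lt {T : Type*} [PartialOrder T] {R : Set T} (hR : IsRay R)
    {x t : T} (hx : x ∈ R) (hxt : ¬x < t) : t ∈ R ↔ t ≤ x := by
  refine ⟨fun ht => ?_, fun htx => hR.2.2.1 x hx t htx⟩
  rcases eq_or_ne t x with rfl | hne
  · exact le_rfl
  · exact (hR.2.1 ht hx hne).resolve_right fun hle => hxt (hle.lt_of_ne hne.symm)

section InitSeg

variable {α : Type*}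

def initSeg (f : ℕ → α) (n : ℕ) : List α := List.ofFn fun i : Fin n => f i

theorem length_initSeg (f : ℕ → α) (n : ℕ) : (initSeg f n).length = n := by
  simp [initSeg]

theorem initSeg_prefix_initSeg_iff {f g : ℕ → α} {m n : ℕ} :
    initSeg f m <+: initSeg g n ↔ m ≤ n ∧ ∀ i < m, f i = g i := by
  constructor
  · intro h
    have hmn : m ≤ n := by simpa [length_initSeg] using h.length_le
    refine ⟨hmn, fun i hi => ?_⟩
    simpa [initSeg] using h.getElem (by simpa [length_initSeg] using hi)
  · rintro ⟨hmn, hfg⟩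
    rw [List.prefix_iff_eq_take]
    apply List.ext_getElem
    · simp [length_initSeg, hmn]
    · intro i hi _
      simp only [length_initSeg] at hi
      simpa [initSeg] using hfg i hi

theorem isOpen_setOf_initSeg [TopologicalSpace α] [DiscreteTopology α] (n : ℕ)
    (p : List α → Prop) : IsOpen {f : ℕ → α | p (initSeg f n)} :=
  (isOpen_discrete {x : Fin n → α | p (List.ofFn x)}).preimage
    (continuous_pi fun i : Fin n => continuous_apply (i : ℕ) :
      Continuous fun (f : ℕ → α) (i : Fin n) => f i)

end InitSeg

section Branch

variable {T α : Type*} [PartialOrder T]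

def branch (φ : List α → T) (f : ℕ → α) : Set T := {v | ∃ n, v ≤ φ (initSeg f n)}

variable {φ : List α → T}

theorem strictMono_initSeg (hφ : ∀ s t : List α, s <+: t ↔ φ s ≤ φ t) (f : ℕ → α) :
    StrictMono fun n => φ (initSeg f n) :=
  fun _ _ hmn =>
    lt_of_le_not_ge ((hφ _ _).1 (initSeg_prefix_initSeg_iff.2 ⟨hmn.le, fun _ _ => rfl⟩))
    fun hnm => hmn.not_ge (initSeg_prefix_initSeg_iff.1 ((hφ _ _).2 hnm)).1

theorem isRay_branch (hφ : ∀ s t : List α, s <+: t ↔ φ s ≤ φ t)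
    (htree : IsOrderTree T) (f : ℕ → α) : IsRay (branch φ f) := by
  have hmono := (strictMono_initSeg hφ f).monotone
  refine ⟨⟨_, 0, le_rfl⟩, ?_, fun _ ⟨n, hn⟩ _ hyx => ⟨n, hyx.trans hn⟩,
    fun _ ⟨n, hn⟩ => ⟨_, ⟨n + 1, le_rfl⟩,
      hn.trans_lt (strictMono_initSeg hφ f n.lt_succ_self)⟩⟩
  rintro x ⟨m, hm⟩ y ⟨n, hn⟩ -
  exact htree.le_total_of_le (hm.trans (hmono (le_max_left m n)))
    (hn.trans (hmono (le_max_right m n)))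

theorem branch_injective (hφ : ∀ s t : List α, s <+: t ↔ φ s ≤ φ t) :
    Function.Injective (branch φ) := by
  intro f g hfg
  funext n
  obtain ⟨m, hm⟩ : φ (initSeg f (n + 1)) ∈ branch φ g := hfg ▸ ⟨n + 1, le_rfl⟩
  exact (initSeg_prefix_initSeg_iff.1 ((hφ _ _).2 hm)).2 n n.lt_succ_self

theorem notMem_branch_of_forall_lt (hφ : ∀ s t : List α, s <+: t ↔ φ s ≤ φ t)
    {f : ℕ → α} {t : T} (hft : ∀ n, φ (initSeg f n) < t) (g : ℕ → α) :
    t ∉ branch φ g := by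
  rintro ⟨m, hm⟩
  have hfm := hft m
  rw [((hφ _ _).2 (hfm.le.trans hm)).eq_of_length (by simp [length_initSeg])] at hfm
  exact hfm.not_ge hm

theorem isClopen_setOf_mem_branch [TopologicalSpace α] [DiscreteTopology α]
    (hφ : ∀ s t : List α, s <+: t ↔ φ s ≤ φ t) (htree : IsOrderTree T) (t : T) :
    IsClopen {f : ℕ → α | t ∈ branch φ f} := by
  have hopen : IsOpen (⋃ n, {f : ℕ → α | t ≤ φ (initSeg f n)}) :=
    isOpen_iUnion fun n => isOpen_setOf_initSeg n fun s => t ≤ φ s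
  rw [← Set.ofPred_exists] at hopen
  refine ⟨⟨?_⟩, hopen⟩
  rw [isOpen_iff_mem_nhds]
  intro f hf
  by_cases hft : ∀ n, φ (initSeg f n) < t
  · exact Filter.Eventually.of_forall (notMem_branch_of_forall_lt hφ hft)
  · obtain ⟨n, hn⟩ := not_forall.1 hft
    filter_upwards [(isOpen_setOf_initSeg n (· = initSeg f n)).mem_nhds rfl] with g hg
    have hgn : ¬φ (initSeg g n) < t := hg ▸ hn
    change t ∉ branch φ g
    rw [(isRay_branch hφ htree g).mem_iff_le_of_not_lt ⟨n, le_rfl⟩ hgn, hg,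
      ← (isRay_branch hφ htree f).mem_iff_le_of_not_lt ⟨n, le_rfl⟩ hn]
    exact hf

def branchRay (hφ : ∀ s t : List α, s <+: t ↔ φ s ≤ φ t)
    (htree : IsOrderTree T) (f : ℕ → α) : RaySpace T :=
  ⟨branch φ f, isRay_branch hφ htree f⟩

theorem continuous_branchRay [TopologicalSpace α] [DiscreteTopology α]
    (hφ : ∀ s t : List α, s <+: t ↔ φ s ≤ φ t) (htree : IsOrderTree T) :
    Continuous (branchRay hφ htree) := by
  refine continuous_generateFrom_iff.2 ?_
  rintro _ ⟨t, rfl | rfl⟩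
  · exact (isClopen_setOf_mem_branch hφ htree t).isOpen
  · exact (isClopen_setOf_mem_branch hφ htree t).compl.isOpen

theorem branchRay_injective (hφ : ∀ s t : List α, s <+: t ↔ φ s ≤ φ t)
    (htree : IsOrderTree T) : Function.Injective (branchRay hφ htree) :=
  fun _ _ hfg => branch_injective hφ (congrArg Subtype.val hfg)

end Branch

theorem cantor_embeds_in_rayspace_general {T : Type*} [PartialOrder T]
    (htree : IsOrderTree T)
    (φ : List Bool → T) (hφ : ∀ s t : List Bool, s <+: t ↔ φ s ≤ φ t) :
    ∃ h : ∀ f : ℕ → Bool,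
        IsRay {v : T | ∃ n : ℕ, v ≤ φ (List.ofFn fun i : Fin n => f i)},
      Topology.IsEmbedding (Y := RaySpace T)
        (fun f : ℕ → Bool =>
          (⟨{v : T | ∃ n : ℕ, v ≤ φ (List.ofFn fun i : Fin n => f i)}, h f⟩ : RaySpace T)) :=
  ⟨isRay_branch hφ htree,
    ((continuous_branchRay hφ htree).isClosedEmbedding
      (branchRay_injective hφ htree)).isEmbedding⟩

/-- If a rooted tree `T` contains a subset order-isomorphic to the binary tree `2^{<ω}`
(via a map `φ` preserving and reflecting the orders), then the map sending `f ∈ 2^ω` to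
the ray generated by the images of the initial segments of `f` is a topological embedding
of the Cantor space `2^ω` into `R(T)`. -/
theorem cantor_embeds_in_rayspace {T : Type*} [PartialOrder T]
    (htree : IsOrderTree T) (r : T) (hroot : ∀ t : T, r ≤ t)
    (φ : List Bool → T) (hφ : ∀ s t : List Bool, s <+: t ↔ φ s ≤ φ t) :
    ∃ h : ∀ f : ℕ → Bool,
        IsRay {v : T | ∃ n : ℕ, v ≤ φ (List.ofFn fun i : Fin n => f i)},
      Topology.IsEmbedding (Y := RaySpace T)
        (fun f : ℕ → Bool =>
          (⟨{v : T | ∃ n : ℕ, v ≤ φ (List.ofFn fun i : Fin n => f i)}, h f⟩ : RaySpace T)) :=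
  cantor_embeds_in_rayspace_general htree φ hφ
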